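/- arXiv:1903.06689 — 2 statements merged into one kernel-verified Lean document; each statement's English description precedes it below -/
import Mathlib

section
/- Let P be a symmetric positive definite n×n real matrix. Then for any skew-symmetric n×n real matrix W, the Lyapunov-type equation Ω P⁻¹ + P⁻¹ Ω = W has a unique skew-symmetric solution Ω. -/
open Matrix

lemma diag1 (n : ℕ) (Q X : Matrix (Fin n) (Fin n) ℝ) (j : Fin n) :
    (Xᵀ * Q * X) j j = (fun k => X k j) ⬝ᵥ Q *ᵥ (fun k => X k j) := by
  simp [Matrix.mul_apply, Matrix.mulVec, dotProduct, Finset.mul_sum, Finset.sum_mul, mul_assoc]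
  rw [Finset.sum_comm]

lemma diag2 (n : ℕ) (Q X : Matrix (Fin n) (Fin n) ℝ) (i : Fin n) :
    (X * Q * Xᵀ) i i = (X i) ⬝ᵥ Q *ᵥ (X i) := by
  simp [Matrix.mul_apply, Matrix.mulVec, dotProduct, Finset.mul_sum, Finset.sum_mul, mul_assoc]
  rw [Finset.sum_comm]

lemma key (n : ℕ) (Q : Matrix (Fin n) (Fin n) ℝ) (hQ : Q.PosDef)
    (X : Matrix (Fin n) (Fin n) ℝ) (h : X * Q + Q * X = 0) : X = 0 := by
  have h2 : Xᵀ * X * Q + Xᵀ * Q * X = 0 := by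
    have := congrArg (Xᵀ * ·) h
    simpa [mul_add, mul_assoc] using this
  have htr : trace (Xᵀ * X * Q) + trace (Xᵀ * Q * X) = 0 := by
    rw [← trace_add, h2, trace_zero]
  have h1 : trace (Xᵀ * X * Q) = ∑ i, (X i) ⬝ᵥ Q *ᵥ (X i) := by
    rw [← Matrix.trace_mul_cycle]
    simp [Matrix.trace, Matrix.diag, diag2]
  have h3 : trace (Xᵀ * Q * X) = ∑ j, (fun k => X k j) ⬝ᵥ Q *ᵥ (fun k => X k j) := by
    simp [Matrix.trace, Matrix.diag, diag1]
  have hnn1 : ∀ i, 0 ≤ (X i) ⬝ᵥ Q *ᵥ (X i) := fun i => by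
    simpa using hQ.posSemidef.dotProduct_mulVec_nonneg (X i)
  have hnn2 : ∀ j, 0 ≤ (fun k => X k j) ⬝ᵥ Q *ᵥ (fun k => X k j) := fun j => by
    simpa using hQ.posSemidef.dotProduct_mulVec_nonneg (fun k => X k j)
  have hsum2 : ∑ j, (fun k => X k j) ⬝ᵥ Q *ᵥ (fun k => X k j) = 0 := by
    have hs1 : 0 ≤ ∑ i, (X i) ⬝ᵥ Q *ᵥ (X i) := Finset.sum_nonneg fun i _ => hnn1 i
    have hs2 : 0 ≤ ∑ j, (fun k => X k j) ⬝ᵥ Q *ᵥ (fun k => X k j) :=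
      Finset.sum_nonneg fun j _ => hnn2 j
    nlinarith [h1 ▸ h3 ▸ htr]
  have hz : ∀ j, (fun k => X k j) ⬝ᵥ Q *ᵥ (fun k => X k j) = 0 := by
    intro j
    exact (Finset.sum_eq_zero_iff_of_nonneg (fun j _ => hnn2 j)).mp hsum2 j (Finset.mem_univ j)
  ext i j
  by_contra hij
  have hcol : (fun k => X k j) ≠ 0 := by
    intro hc
    exact hij (by simpa using congrFun hc i)
  have := hQ.dotProduct_mulVec_pos hcol
  rw [star_trivial] at this
  exact absurd (hz j) (ne_of_gt this)

theorem lyapunov_unique_skew_solution (n : ℕ)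
    (P : Matrix (Fin n) (Fin n) ℝ) (hP : P.IsSymm) (hPpd : P.PosDef)
    (W : Matrix (Fin n) (Fin n) ℝ) (hW : Wᵀ = -W) :
    ∃! Ω : Matrix (Fin n) (Fin n) ℝ, Ωᵀ = -Ω ∧ Ω * P⁻¹ + P⁻¹ * Ω = W := by
  set Q := P⁻¹ with hQdef
  have hQ : Q.PosDef := hPpd.inv
  have hQsymm : Qᵀ = Q := by
    have := hQ.isHermitian
    simpa [Matrix.IsHermitian] using this
  let L : Matrix (Fin n) (Fin n) ℝ →ₗ[ℝ] Matrix (Fin n) (Fin n) ℝ :=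
    { toFun := fun X => X * Q + Q * X
      map_add' := fun a b => by simp [add_mul, mul_add]; abel
      map_smul' := fun c a => by simp [smul_add] }
  have hinj : Function.Injective L := by
    intro X Y h
    have h0 : (X - Y) * Q + Q * (X - Y) = 0 := by
      simp only [L, LinearMap.coe_mk, AddHom.coe_mk] at h
      rw [sub_mul, mul_sub, sub_add_sub_comm, h, sub_self]
    exact sub_eq_zero.mp (key n Q hQ (X - Y) h0)
  have hsurj : Function.Surjective L := (LinearMap.injective_iff_surjective).mp hinj
  obtain ⟨X, hX⟩ := hsurj W
  have hXeq : X * Q + Q * X = W := hX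
  have hLskew : L (-Xᵀ) = W := by
    show -Xᵀ * Q + Q * -Xᵀ = W
    have : -Xᵀ * Q + Q * -Xᵀ = -((X * Q + Q * X)ᵀ) := by
      rw [transpose_add, transpose_mul, transpose_mul, hQsymm]
      simp only [neg_mul, mul_neg, neg_add]
      abel
    rw [this, hXeq, hW, neg_neg]
  have hskew : Xᵀ = -X := by
    have h := hinj (show L (-Xᵀ) = L X from hLskew.trans hX.symm)
    exact neg_eq_iff_eq_neg.mp h
  refine ⟨X, ⟨hskew, hXeq⟩, ?_⟩
  rintro Y ⟨-, hY⟩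
  exact hinj (show L Y = L X from hY.trans hXeq.symm)
end

section
/- Let P, D be symmetric n×n real matrices with P positive definite. Define L : Skew(n) → ℝ by L(Ω) = tr((D/2 + Ω) P⁻¹ (D/2 + Ω)ᵀ). Then Ω* ∈ Skew(n) is a critical point of L (i.e., the derivative of L vanishes in all skew-symmetric directions) if and only if Ω* P⁻¹ + P⁻¹ Ω* = (1/2)(P⁻¹ D - D P⁻¹). -/
open Matrix

private lemma trace_self_mul_transpose_eq_zero {n : ℕ} (S : Matrix (Fin n) (Fin n) ℝ)
    (h : (S * Sᵀ).trace = 0) : S = 0 := by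
  have h2 : ∑ i, ∑ j, S i j * S i j = 0 := by
    simpa [Matrix.trace, Matrix.mul_apply, Matrix.diag] using h
  have hz : ∀ i ∈ Finset.univ, ∑ j, S i j * S i j = (0:ℝ) := by
    rw [← Finset.sum_eq_zero_iff_of_nonneg]
    · exact h2
    · intro i _
      exact Finset.sum_nonneg fun j _ => mul_self_nonneg _
  ext i j
  have := (Finset.sum_eq_zero_iff_of_nonneg (fun j _ => mul_self_nonneg (S i j))).mp
    (hz i (Finset.mem_univ i)) j (Finset.mem_univ j)
  simpa using mul_self_eq_zero.mp this

theorem critical_point_iff_lyapunov (n : ℕ)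
    (P D : Matrix (Fin n) (Fin n) ℝ) (hP : P.IsSymm) (hPpd : P.PosDef)
    (hD : D.IsSymm) (Ω : Matrix (Fin n) (Fin n) ℝ) (hΩ : Ωᵀ = -Ω) :
    (∀ X : Matrix (Fin n) (Fin n) ℝ, Xᵀ = -X →
      deriv (fun t : ℝ =>
        (((1/2 : ℝ) • D + (Ω + t • X)) * P⁻¹ * ((1/2 : ℝ) • D + (Ω + t • X))ᵀ).trace) 0 = 0)
    ↔ Ω * P⁻¹ + P⁻¹ * Ω = (1/2 : ℝ) • (P⁻¹ * D - D * P⁻¹) := by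
  set Q : Matrix (Fin n) (Fin n) ℝ := P⁻¹ with hQdef
  have hQ : Qᵀ = Q := by
    rw [hQdef, Matrix.transpose_nonsing_inv, hP]
  set A : Matrix (Fin n) (Fin n) ℝ := (1/2 : ℝ) • D + Ω with hAdef
  have hAT : Aᵀ = (1/2 : ℝ) • D - Ω := by
    rw [hAdef, Matrix.transpose_add, Matrix.transpose_smul, hD, hΩ, sub_eq_add_neg]
  set M : Matrix (Fin n) (Fin n) ℝ := Q * Aᵀ with hMdef
  -- trace identity
  have htr : ∀ X : Matrix (Fin n) (Fin n) ℝ, (A * Q * Xᵀ).trace = (X * M).trace := by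
    intro X
    calc (A * Q * Xᵀ).trace = ((A * Q * Xᵀ)ᵀ).trace := (Matrix.trace_transpose _).symm
      _ = (X * (Qᵀ * Aᵀ)).trace := by
          rw [Matrix.transpose_mul, Matrix.transpose_mul, Matrix.transpose_transpose]
      _ = (X * M).trace := by rw [hQ, ← hMdef]
  have htrskew : ∀ X : Matrix (Fin n) (Fin n) ℝ, Xᵀ = -X →
      (X * Mᵀ).trace = -(X * M).trace := by
    intro X hX
    calc (X * Mᵀ).trace = ((X * Mᵀ)ᵀ).trace := (Matrix.trace_transpose _).symm
      _ = (M * Xᵀ).trace := by rw [Matrix.transpose_mul, Matrix.transpose_transpose]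
      _ = -(M * X).trace := by rw [hX]; simp
      _ = -(X * M).trace := by rw [Matrix.trace_mul_comm]
  -- compute the derivative
  have hderiv : ∀ X : Matrix (Fin n) (Fin n) ℝ,
      deriv (fun t : ℝ =>
        (((1/2 : ℝ) • D + (Ω + t • X)) * Q * ((1/2 : ℝ) • D + (Ω + t • X))ᵀ).trace) 0
      = (X * Q * Aᵀ).trace + (A * Q * Xᵀ).trace := by
    intro X
    have hfun : (fun t : ℝ =>
        (((1/2 : ℝ) • D + (Ω + t • X)) * Q * ((1/2 : ℝ) • D + (Ω + t • X))ᵀ).trace)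
        = fun t : ℝ => (A * Q * Aᵀ).trace
            + t * ((X * Q * Aᵀ).trace + (A * Q * Xᵀ).trace)
            + t ^ 2 * (X * Q * Xᵀ).trace := by
      funext t
      have : (1/2 : ℝ) • D + (Ω + t • X) = A + t • X := by rw [hAdef, add_assoc]
      rw [this]
      simp only [Matrix.transpose_add, Matrix.transpose_smul, Matrix.add_mul, Matrix.mul_add,
        Matrix.smul_mul, Matrix.mul_smul, Matrix.trace_add, Matrix.trace_smul, smul_eq_mul]
      ring
    rw [hfun]
    have h1 : HasDerivAt (fun t : ℝ => (A * Q * Aᵀ).trace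
            + t * ((X * Q * Aᵀ).trace + (A * Q * Xᵀ).trace)
            + t ^ 2 * (X * Q * Xᵀ).trace)
        ((X * Q * Aᵀ).trace + (A * Q * Xᵀ).trace) 0 := by
      have := (((hasDerivAt_id (0:ℝ)).mul_const
          ((X * Q * Aᵀ).trace + (A * Q * Xᵀ).trace)).const_add ((A * Q * Aᵀ).trace)).add
        ((hasDerivAt_pow 2 (0:ℝ)).mul_const ((X * Q * Xᵀ).trace))
      exact this.congr_deriv (by simp)
    exact h1.deriv
  -- condition ↔ ∀ skew X, trace (X * M) = 0
  have hcond : (∀ X : Matrix (Fin n) (Fin n) ℝ, Xᵀ = -X →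
      deriv (fun t : ℝ =>
        (((1/2 : ℝ) • D + (Ω + t • X)) * Q * ((1/2 : ℝ) • D + (Ω + t • X))ᵀ).trace) 0 = 0)
      ↔ ∀ X : Matrix (Fin n) (Fin n) ℝ, Xᵀ = -X → (X * M).trace = 0 := by
    constructor
    · intro h X hX
      have := h X hX
      rw [hderiv X, htr X] at this
      have : (2:ℝ) * (X * M).trace = 0 := by
        rw [two_mul]
        convert this using 2
        rw [hMdef, ← mul_assoc]
      linarith
    · intro h X hX
      rw [hderiv X, htr X]
      have h0 := h X hX
      have : (X * Q * Aᵀ).trace = (X * M).trace := by rw [hMdef, mul_assoc]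
      rw [this, h0, add_zero]
  -- ∀ skew X, trace (X * M) = 0 ↔ Mᵀ = M
  have hkey : (∀ X : Matrix (Fin n) (Fin n) ℝ, Xᵀ = -X → (X * M).trace = 0) ↔ Mᵀ = M := by
    constructor
    · intro h
      set S : Matrix (Fin n) (Fin n) ℝ := M - Mᵀ with hSdef
      have hS : Sᵀ = -S := by
        rw [hSdef, Matrix.transpose_sub, Matrix.transpose_transpose]; abel
      have h1 : (S * M).trace = 0 := h S hS
      have h2 : (S * Mᵀ).trace = 0 := by rw [htrskew S hS, h1, neg_zero]
      have h3 : (S * S).trace = 0 := by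
        rw [hSdef, Matrix.mul_sub, Matrix.trace_sub]
        rw [← hSdef, h1, h2, sub_zero]
      have h4 : (S * Sᵀ).trace = 0 := by rw [hS]; simpa using h3
      have := trace_self_mul_transpose_eq_zero S h4
      rw [hSdef, sub_eq_zero] at this
      exact this.symm
    · intro h X hX
      have := htrskew X hX
      rw [h] at this
      linarith
  rw [hcond, hkey]
  -- Mᵀ = M ↔ Lyapunov
  have hM : M = (1/2 : ℝ) • (Q * D) - Q * Ω := by
    rw [hMdef, hAT, Matrix.mul_sub, Matrix.mul_smul]
  have hMT : Mᵀ = (1/2 : ℝ) • (D * Q) + Ω * Q := by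
    rw [hMdef, Matrix.transpose_mul, Matrix.transpose_transpose, hQ, hAdef,
      Matrix.add_mul, Matrix.smul_mul]
  constructor
  · intro h
    rw [hMT, hM] at h
    rw [smul_sub]
    rw [← sub_eq_zero] at h ⊢
    have heq : Ω * Q + Q * Ω - ((1 / 2 : ℝ) • (Q * D) - (1 / 2 : ℝ) • (D * Q))
        = (1 / 2 : ℝ) • (D * Q) + Ω * Q - ((1 / 2 : ℝ) • (Q * D) - Q * Ω) := by
      module
    rw [heq, h]
  · intro h
    rw [hMT, hM]
    rw [smul_sub] at h
    rw [← sub_eq_zero] at h ⊢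
    have heq : (1 / 2 : ℝ) • (D * Q) + Ω * Q - ((1 / 2 : ℝ) • (Q * D) - Q * Ω)
        = Ω * Q + Q * Ω - ((1 / 2 : ℝ) • (Q * D) - (1 / 2 : ℝ) • (D * Q)) := by
      module
    rw [heq, h]
end
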